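/- Let F be a Borel probability measure on [0,1] with continuous density f with respect to Lebesgue measure, and suppose there exist c > 0 and δ > 0 such that f(x) = c + O((1−x)^δ) as x → 1⁻. Then ∑_{k=2}^n (n choose k) (−1)^k ζ_F(k) = c n log n + O(n) as n → ∞, where ζ_F(k) = ∑_{j=1}^∞ m_j(F)^k. -/

import Mathlib

/-!
Write `m_j` for the moments. Expanding `(1 - m_j)^n` binomially, the alternating sum is
`∑_j ((1 - m_j)^n - 1 + n m_j)`, each term lying between `max 0 (n m_j - 1)` and
`min (n m_j) (n m_j)^2`. As `f` is bounded, `m_j = O(1/j)`, so the terms with `j ≥ n` add up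
to `O(n)` and the sum is `n ∑_{j ≤ n} m_j + O(n)`. Finally
`m_j - c/(j+1) = ∫ x^j (f x - c) dx`, and since `∑_{j ≤ n} x^j ≤ 1/(1-x)`, the hypothesis
`f x - c = O((1-x)^δ)` bounds `∑_{j ≤ n} (m_j - c/(j+1))` by the convergent integral
`∫ (1-x)^(δ-1)`; hence `∑_{j ≤ n} m_j = c log n + O(1)`.
-/

open Finset Filter Asymptotics Real MeasureTheory intervalIntegral Topology

lemma sum_Icc_two_choose_mul_neg_one_pow_mul_pow (n : ℕ) (m : ℝ) :
    ∑ k ∈ Icc 2 n, (n.choose k : ℝ) * (-1) ^ k * m ^ k = (1 - m) ^ n - 1 + n * m := by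
  rcases Nat.eq_zero_or_pos n with rfl | hn
  · simp
  have hexp : (1 - m) ^ n = ∑ k ∈ range (n + 1), (n.choose k : ℝ) * (-1) ^ k * m ^ k := by
    rw [sub_eq_neg_add, add_pow]
    exact sum_congr rfl fun k _ => by rw [neg_pow]; ring
  rw [hexp, range_eq_Ico, ← sum_Ico_consecutive _ (Nat.zero_le 2) (by omega),
    Ico_add_one_right_eq_Icc]
  simp [sum_range_succ]
  ring

lemma one_sub_pow_le_one_sub_mul_add_sq {m : ℝ} (h0 : 0 ≤ m) (h1 : m ≤ 1) (n : ℕ) :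
    (1 - m) ^ n ≤ 1 - n * m + (n * m) ^ 2 := by
  induction n with
  | zero => simp
  | succ n ih =>
    rw [pow_succ]
    push_cast
    nlinarith [mul_le_mul_of_nonneg_right ih (sub_nonneg.2 h1), sq_nonneg m,
      sq_nonneg ((n : ℝ) * m),
      mul_nonneg (mul_nonneg (sq_nonneg (n : ℝ)) (mul_nonneg h0 h0)) h0]

lemma abs_one_sub_pow_sub_one_le {m : ℝ} (h0 : 0 ≤ m) (h1 : m ≤ 1) (n : ℕ) :
    |(1 - m) ^ n - 1| ≤ 1 := by
  have hle : (1 - m) ^ n ≤ 1 := pow_le_one₀ (by linarith) (by linarith)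
  have hnn : 0 ≤ (1 - m) ^ n := pow_nonneg (by linarith) n
  rw [abs_le]; constructor <;> linarith

lemma isBigO_sum_range_inv_add_two_sub_log :
    (fun n : ℕ => ∑ j ∈ range n, ((j : ℝ) + 2)⁻¹ - log n)
      =O[atTop] fun _ => (1 : ℝ) := by
  refine isBigO_one_nat_atTop_iff.2 ⟨1, fun n => ?_⟩
  rcases Nat.eq_zero_or_pos n with rfl | hn
  · simp
  have hsum : ∑ j ∈ range n, ((j : ℝ) + 2)⁻¹ = harmonic (n + 1) - 1 := by
    simp [harmonic, sum_range_succ', add_assoc, one_add_one_eq_two]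
  have hlow := log_add_one_le_harmonic (n + 1)
  have hup := harmonic_le_one_add_log (n + 1)
  have hn' : (1 : ℝ) ≤ n := by exact_mod_cast hn
  have hlog1 : log n ≤ log ((n + 1 + 1 : ℕ) : ℝ) :=
    log_le_log (by positivity) (by push_cast; linarith)
  have hlog2 : log ((n + 1 : ℕ) : ℝ) ≤ log n + 1 :=
    calc log ((n + 1 : ℕ) : ℝ) ≤ log (n * exp 1) :=
          log_le_log (by positivity) (by push_cast; nlinarith [add_one_le_exp (1 : ℝ)])
      _ = log n + 1 := by rw [log_mul (by positivity) (exp_pos 1).ne', log_exp]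
  rw [Real.norm_eq_abs, abs_le, hsum]
  constructor <;> linarith

section Sequence

variable {a : ℕ → ℝ} {A : ℝ}

lemma sum_range_sq_nat_add_le (h0 : ∀ j, 0 ≤ a j) (hA : ∀ j, a j ≤ A / (j + 2))
    (n N : ℕ) :
    ∑ j ∈ range N, a (j + n) ^ 2 ≤ A ^ 2 / (n + 1) := by
  set u : ℕ → ℝ := fun j => A ^ 2 / (((j + n : ℕ) : ℝ) + 1)
  have hterm : ∀ j, a (j + n) ^ 2 ≤ u j - u (j + 1) := fun j => by
    have hx : (0 : ℝ) ≤ j + n := by positivity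
    calc a (j + n) ^ 2 ≤ (A / ((j + n : ℕ) + 2)) ^ 2 := pow_le_pow_left₀ (h0 _) (hA _) 2
      _ ≤ u j - u (j + 1) := by
        simp only [u]; push_cast
        rw [div_pow, div_sub_div _ _ (by positivity) (by positivity),
          div_le_div_iff₀ (by positivity) (by positivity)]
        nlinarith [sq_nonneg A]
  calc ∑ j ∈ range N, a (j + n) ^ 2 ≤ ∑ j ∈ range N, (u j - u (j + 1)) :=
        sum_le_sum fun j _ => hterm j
    _ = u 0 - u N := sum_range_sub' u N
    _ ≤ u 0 := sub_le_self _ (by positivity)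
    _ = A ^ 2 / (n + 1) := by simp [u]

lemma summable_sq_of_le_div (h0 : ∀ j, 0 ≤ a j) (hA : ∀ j, a j ≤ A / (j + 2)) :
    Summable fun j => a j ^ 2 :=
  summable_of_sum_range_le (fun _ => sq_nonneg _) (sum_range_sq_nat_add_le h0 hA 0)

lemma tsum_sq_nat_add_le (h0 : ∀ j, 0 ≤ a j) (hA : ∀ j, a j ≤ A / (j + 2)) (n : ℕ) :
    ∑' j, a (j + n) ^ 2 ≤ A ^ 2 / (n + 1) :=
  Real.tsum_le_of_sum_range_le (fun _ => sq_nonneg _) (sum_range_sq_nat_add_le h0 hA n)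

lemma sum_Icc_two_choose_mul_tsum_pow (h0 : ∀ j, 0 ≤ a j) (h1 : ∀ j, a j ≤ 1)
    (hsq : Summable fun j => a j ^ 2) (n : ℕ) :
    ∑ k ∈ Icc 2 n, (n.choose k : ℝ) * (-1) ^ k * ∑' j, a j ^ k =
      ∑' j, ((1 - a j) ^ n - 1 + n * a j) := by
  have hsum : ∀ k ∈ Icc 2 n, Summable fun j => (n.choose k : ℝ) * (-1) ^ k * a j ^ k :=
    fun k hk => (hsq.of_nonneg_of_le (fun j => pow_nonneg (h0 j) k)
      (fun j => pow_le_pow_of_le_one (h0 j) (h1 j) (mem_Icc.1 hk).1)).mul_left _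
  simp_rw [← tsum_mul_left, ← Summable.tsum_finsetSum hsum,
    sum_Icc_two_choose_mul_neg_one_pow_mul_pow]

lemma abs_tsum_one_sub_pow_sub_le (h0 : ∀ j, 0 ≤ a j) (h1 : ∀ j, a j ≤ 1)
    (hA : ∀ j, a j ≤ A / (j + 2)) (n : ℕ) :
    |∑' j, ((1 - a j) ^ n - 1 + n * a j) - n * ∑ j ∈ range n, a j| ≤ (1 + A ^ 2) * n := by
  set G : ℕ → ℝ := fun j => (1 - a j) ^ n - 1 + n * a j
  have hG0 : ∀ j, 0 ≤ G j := fun j => by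
    have := one_add_mul_le_pow (a := -a j) (by linarith [h1 j]) n
    simp only [G]; rw [← sub_eq_add_neg] at this; linarith
  have hG_sq : ∀ j, G j ≤ n ^ 2 * a j ^ 2 := fun j => by
    have := one_sub_pow_le_one_sub_mul_add_sq (h0 j) (h1 j) n
    simp only [G]; rw [mul_pow] at this; linarith
  have hsq := summable_sq_of_le_div h0 hA
  have hGsum : Summable G := hsq.mul_left _ |>.of_nonneg_of_le hG0 hG_sq
  have head : |∑ j ∈ range n, G j - n * ∑ j ∈ range n, a j| ≤ n :=
    calc |∑ j ∈ range n, G j - n * ∑ j ∈ range n, a j|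
        = |∑ j ∈ range n, ((1 - a j) ^ n - 1)| := by
          simp only [G, mul_sum, ← sum_sub_distrib, add_sub_cancel_right]
      _ ≤ ∑ j ∈ range n, |(1 - a j) ^ n - 1| := abs_sum_le_sum_abs _ _
      _ ≤ ∑ _j ∈ range n, 1 :=
          sum_le_sum fun j _ => abs_one_sub_pow_sub_one_le (h0 j) (h1 j) n
      _ = n := by simp
  have tail : 0 ≤ ∑' j, G (j + n) ∧ ∑' j, G (j + n) ≤ A ^ 2 * n := by
    refine ⟨tsum_nonneg fun j => hG0 _, ?_⟩
    calc ∑' j, G (j + n) ≤ ∑' j, n ^ 2 * a (j + n) ^ 2 :=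
          ((summable_nat_add_iff n).2 hGsum).tsum_le_tsum (fun j => hG_sq _)
            (((summable_nat_add_iff n).2 hsq).mul_left _)
      _ = n ^ 2 * ∑' j, a (j + n) ^ 2 := tsum_mul_left
      _ ≤ n ^ 2 * (A ^ 2 / (n + 1)) := by gcongr; exact tsum_sq_nat_add_le h0 hA n
      _ = A ^ 2 * n * (n / (n + 1)) := by ring
      _ ≤ A ^ 2 * n :=
          mul_le_of_le_one_right (by positivity) (div_le_one_of_le₀ (by linarith) (by positivity))
  rw [← hGsum.sum_add_tsum_nat_add n]
  rw [abs_le] at head ⊢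
  constructor <;> nlinarith [tail.1, tail.2, head.1, head.2]

theorem isBigO_sum_Icc_two_choose_mul_tsum_pow_sub (h0 : ∀ j, 0 ≤ a j) (h1 : ∀ j, a j ≤ 1)
    (hA : ∀ j, a j ≤ A / (j + 2)) {c : ℝ}
    (hsum : (fun n : ℕ => ∑ j ∈ range n, a j - c * log n) =O[atTop] fun _ => (1 : ℝ)) :
    (fun n : ℕ =>
        ∑ k ∈ Icc 2 n, (n.choose k : ℝ) * (-1) ^ k * ∑' j, a j ^ k - c * n * log n)
      =O[atTop] fun n => (n : ℝ) := by
  have hdiff : (fun n : ℕ => ∑' j, ((1 - a j) ^ n - 1 + n * a j) - n * ∑ j ∈ range n, a j)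
      =O[atTop] fun n => (n : ℝ) :=
    .of_bound (1 + A ^ 2) <| .of_forall fun n => by
      simpa using abs_tsum_one_sub_pow_sub_le h0 h1 hA n
  have hmain : (fun n : ℕ => n * (∑ j ∈ range n, a j - c * log n))
      =O[atTop] fun n => (n : ℝ) := by
    simpa using (isBigO_refl (fun n : ℕ => (n : ℝ)) atTop).mul hsum
  refine (hdiff.add hmain).congr_left fun n => ?_
  rw [sum_Icc_two_choose_mul_tsum_pow h0 h1 (summable_sq_of_le_div h0 hA)]
  ring

end Sequence

section Density

variable {f : ℝ → ℝ}

lemma integral_pow_mul_nonneg (hf0 : ∀ x ∈ Set.Icc (0 : ℝ) 1, 0 ≤ f x) (k : ℕ) :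
    0 ≤ ∫ x in (0 : ℝ)..1, x ^ k * f x :=
  integral_nonneg zero_le_one fun x hx => mul_nonneg (pow_nonneg hx.1 k) (hf0 x hx)

lemma integral_pow_mul_le_integral (hf : IntervalIntegrable f volume 0 1)
    (hf0 : ∀ x ∈ Set.Icc (0 : ℝ) 1, 0 ≤ f x) (k : ℕ) :
    ∫ x in (0 : ℝ)..1, x ^ k * f x ≤ ∫ x in (0 : ℝ)..1, f x :=
  integral_mono_on zero_le_one (hf.continuousOn_mul (continuous_pow k).continuousOn) hf
    fun x hx => mul_le_of_le_one_left (hf0 x hx) (pow_le_one₀ hx.1 hx.2)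

lemma integral_pow_mul_le_div (hf : IntervalIntegrable f volume 0 1) {M : ℝ}
    (hM : ∀ x ∈ Set.Icc (0 : ℝ) 1, f x ≤ M) (k : ℕ) :
    ∫ x in (0 : ℝ)..1, x ^ k * f x ≤ M / (k + 1) := by
  calc ∫ x in (0 : ℝ)..1, x ^ k * f x ≤ ∫ x in (0 : ℝ)..1, x ^ k * M :=
        integral_mono_on zero_le_one (hf.continuousOn_mul (continuous_pow k).continuousOn)
          (intervalIntegrable_const.continuousOn_mul (continuous_pow k).continuousOn)
          fun x hx => mul_le_mul_of_nonneg_left (hM x hx) (pow_nonneg hx.1 k)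
    _ = M / (k + 1) := by simp [intervalIntegral.integral_mul_const, integral_pow]; ring

lemma sum_range_integral_pow_succ_mul_sub (hf : IntervalIntegrable f volume 0 1) (c : ℝ)
    (n : ℕ) :
    ∑ j ∈ range n, (∫ x in (0 : ℝ)..1, x ^ (j + 1) * f x) -
        c * ∑ j ∈ range n, ((j : ℝ) + 2)⁻¹ =
      ∫ x in (0 : ℝ)..1, (∑ j ∈ range n, x ^ (j + 1)) * (f x - c) := by
  have hint : ∀ j : ℕ, IntervalIntegrable (fun x => x ^ (j + 1) * (f x - c)) volume 0 1 :=
    fun j => (hf.sub intervalIntegrable_const).continuousOn_mul (continuous_pow _).continuousOn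
  simp_rw [sum_mul]
  rw [intervalIntegral.integral_finsetSum fun j _ => hint j, mul_sum, ← sum_sub_distrib]
  refine sum_congr rfl fun j _ => ?_
  simp_rw [mul_sub]
  rw [integral_sub (hf.continuousOn_mul (continuous_pow _).continuousOn)
    (intervalIntegrable_const.continuousOn_mul (continuous_pow _).continuousOn),
    intervalIntegral.integral_mul_const, integral_pow]
  push_cast
  ring

end Density

lemma integral_one_sub_rpow_sub_one {δ : ℝ} (hδ : 0 < δ) :
    ∫ x in (0 : ℝ)..1, (1 - x) ^ (δ - 1) = δ⁻¹ := by
  rw [integral_comp_sub_left (fun x => x ^ (δ - 1)), sub_self, sub_zero,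
    integral_rpow (Or.inl (by linarith)), sub_add_cancel, one_rpow, zero_rpow hδ.ne']
  simp

lemma sum_range_pow_succ_mul_one_sub_le {x : ℝ} (hx0 : 0 ≤ x) (hx1 : x ≤ 1) (n : ℕ) :
    (∑ j ∈ range n, x ^ (j + 1)) * (1 - x) ≤ 1 := by
  have hgeom : (∑ j ∈ range n, x ^ (j + 1)) * (1 - x) = x * (1 - x ^ n) := by
    simp_rw [pow_succ', ← mul_sum, ← mul_neg_geom_sum]; ring
  rw [hgeom]
  exact mul_le_one₀ hx1 (by linarith [pow_le_one₀ hx0 hx1 (n := n)])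
    (by linarith [pow_nonneg hx0 n])

lemma abs_integral_sum_pow_succ_mul_le {g : ℝ → ℝ} {C δ : ℝ} (hδ : 0 < δ)
    (hg : IntervalIntegrable g volume 0 1)
    (hgC : ∀ x ∈ Set.Ico (0 : ℝ) 1, |g x| ≤ C * (1 - x) ^ δ) (n : ℕ) :
    |∫ x in (0 : ℝ)..1, (∑ j ∈ range n, x ^ (j + 1)) * g x| ≤ C / δ := by
  set P : ℝ → ℝ := fun x => ∑ j ∈ range n, x ^ (j + 1)
  have hC : 0 ≤ C := by simpa using (abs_nonneg _).trans (hgC 0 (by simp))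
  -- `P x ≤ 1 / (1 - x)` costs one power of `1 - x`, leaving the integrable `(1 - x) ^ (δ - 1)`.
  have hpt : ∀ x ∈ Set.Ioo (0 : ℝ) 1, |P x * g x| ≤ C * (1 - x) ^ (δ - 1) := by
    intro x ⟨hx0, hx1⟩
    have hpos : 0 < 1 - x := by linarith
    have hP : 0 ≤ P x := sum_nonneg fun j _ => pow_nonneg hx0.le _
    rw [abs_mul, abs_of_nonneg hP]
    calc P x * |g x| ≤ P x * (C * (1 - x) ^ δ) :=
          mul_le_mul_of_nonneg_left (hgC x ⟨hx0.le, hx1⟩) hP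
      _ = C * (P x * (1 - x)) * (1 - x) ^ (δ - 1) := by
          rw [rpow_sub_one hpos.ne']; field_simp
      _ ≤ C * (1 - x) ^ (δ - 1) := by
          rw [mul_assoc]
          exact mul_le_mul_of_nonneg_left (mul_le_of_le_one_left (rpow_nonneg hpos.le _)
            (sum_range_pow_succ_mul_one_sub_le hx0.le hx1.le n)) hC
  have hrpow : IntervalIntegrable (fun x => C * (1 - x) ^ (δ - 1)) volume 0 1 := by
    simpa using ((intervalIntegrable_rpow' (a := 0) (b := 1)
      (by linarith : -1 < δ - 1)).comp_sub_left 1).symm.const_mul C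
  calc |∫ x in (0 : ℝ)..1, P x * g x| ≤ ∫ x in (0 : ℝ)..1, |P x * g x| :=
        abs_integral_le_integral_abs zero_le_one
    _ ≤ ∫ x in (0 : ℝ)..1, C * (1 - x) ^ (δ - 1) :=
        integral_mono_on_of_le_Ioo zero_le_one
          (hg.continuousOn_mul (by fun_prop : Continuous P).continuousOn).abs hrpow hpt
    _ = C / δ := by
        rw [intervalIntegral.integral_const_mul, integral_one_sub_rpow_sub_one hδ, div_eq_mul_inv]

lemma exists_abs_le_mul_one_sub_rpow {g : ℝ → ℝ} {δ : ℝ}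
    (hg : ContinuousOn g (Set.Icc 0 1))
    (h : g =O[𝓝[<] 1] fun x => (1 - x) ^ δ) :
    ∃ C, ∀ x ∈ Set.Ico (0 : ℝ) 1, |g x| ≤ C * (1 - x) ^ δ := by
  obtain ⟨C₁, hC₁⟩ := h.bound
  obtain ⟨x₁, hx₁ : x₁ < 1, hnear⟩ := mem_nhdsLT_iff_exists_Ioo_subset.1 hC₁
  have hpos : ∀ x : ℝ, x < 1 → 0 < (1 - x) ^ δ :=
    fun x hx => rpow_pos_of_pos (by linarith) δ
  -- Away from `1` the ratio `g x / (1 - x) ^ δ` is continuous on a compact interval.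
  obtain ⟨C₂, hC₂⟩ := (isCompact_Icc (a := 0) (b := x₁)).exists_bound_of_continuousOn
    (f := fun x => g x / (1 - x) ^ δ) <|
      (hg.mono (Set.Icc_subset_Icc_right hx₁.le)).div
        (ContinuousOn.rpow_const (f := fun x => 1 - x) (by fun_prop)
          fun x hx => Or.inl (by linarith [hx.2]))
        fun x hx => (hpos x (by linarith [hx.2])).ne'
  refine ⟨max C₁ C₂, fun x hx => ?_⟩
  rcases le_or_gt x x₁ with hle | hlt
  · have := hC₂ x ⟨hx.1, hle⟩
    rw [norm_div, norm_of_nonneg (hpos x hx.2).le, div_le_iff₀ (hpos x hx.2)] at this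
    exact this.trans (mul_le_mul_of_nonneg_right (le_max_right _ _) (hpos x hx.2).le)
  · have := hnear ⟨hlt, hx.2⟩
    simp only [Set.mem_ofPred_eq, norm_eq_abs, abs_of_pos (hpos x hx.2)] at this
    exact this.trans (mul_le_mul_of_nonneg_right (le_max_left _ _) (hpos x hx.2).le)

theorem moment_zeta_alternating_sum_with_error_general
    (f : ℝ → ℝ) (hcont : ContinuousOn f (Set.Icc (0 : ℝ) 1)) (hnn : ∀ x, 0 ≤ f x)
    (hprob : ∫ x in (0 : ℝ)..1, f x = 1)
    (c δ : ℝ) (hδ : 0 < δ)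
    (hasymp : Asymptotics.IsBigO (nhdsWithin 1 (Set.Iio (1 : ℝ)))
      (fun x => f x - c) (fun x => (1 - x) ^ δ)) :
    Asymptotics.IsBigO Filter.atTop
      (fun n : ℕ => (∑ k ∈ Finset.Icc 2 n, (n.choose k : ℝ) * (-1 : ℝ) ^ k *
          ∑' j : ℕ, (∫ x in (0 : ℝ)..1, x ^ (j + 1) * f x) ^ k) -
        c * n * Real.log n)
      (fun n : ℕ => (n : ℝ)) := by
  have hf : IntervalIntegrable f volume 0 1 := hcont.intervalIntegrable_of_Icc zero_le_one
  obtain ⟨M, hM⟩ := isCompact_Icc.exists_bound_of_continuousOn hcont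
  obtain ⟨C, hC⟩ := exists_abs_le_mul_one_sub_rpow (hcont.sub continuousOn_const) hasymp
  have hpartial : (fun n : ℕ => ∑ j ∈ range n, (∫ x in (0 : ℝ)..1, x ^ (j + 1) * f x) -
      c * ∑ j ∈ range n, ((j : ℝ) + 2)⁻¹) =O[atTop] fun _ => (1 : ℝ) :=
    isBigO_one_nat_atTop_iff.2 ⟨C / δ, fun n => by
      rw [norm_eq_abs, sum_range_integral_pow_succ_mul_sub hf]
      exact abs_integral_sum_pow_succ_mul_le hδ (hf.sub intervalIntegrable_const) hC n⟩
  refine isBigO_sum_Icc_two_choose_mul_tsum_pow_sub (A := M)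
    (fun _ => integral_pow_mul_nonneg (fun x _ => hnn x) _)
    (fun _ => (integral_pow_mul_le_integral hf (fun x _ => hnn x) _).trans hprob.le)
    (fun j => ?_) ?_
  · have := integral_pow_mul_le_div hf (fun x hx => (le_abs_self _).trans (hM x hx)) (j + 1)
    push_cast at this
    rwa [add_assoc, one_add_one_eq_two] at this
  · refine (hpartial.add (isBigO_sum_range_inv_add_two_sub_log.const_mul_left c)).congr_left
      fun n => ?_
    ring

/-- Let `F` be a Borel probability measure on `[0,1]` with continuous density
`f` satisfying `f(x) = c + O((1−x)^δ)` as `x → 1⁻`, with `c, δ > 0`.  Then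
`∑_{k=2}^n C(n,k)(−1)^k ζ_F(k) = c n log n + O(n)` as `n → ∞`. -/
theorem moment_zeta_alternating_sum_with_error
    (f : ℝ → ℝ) (hcont : ContinuousOn f (Set.Icc (0 : ℝ) 1)) (hnn : ∀ x, 0 ≤ f x)
    (hsupp : ∀ x, x ∉ Set.Icc (0 : ℝ) 1 → f x = 0)
    (hprob : ∫ x in (0 : ℝ)..1, f x = 1)
    (c δ : ℝ) (hc : 0 < c) (hδ : 0 < δ)
    (hasymp : Asymptotics.IsBigO (nhdsWithin 1 (Set.Iio (1 : ℝ)))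
      (fun x => f x - c) (fun x => (1 - x) ^ δ)) :
    Asymptotics.IsBigO Filter.atTop
      (fun n : ℕ => (∑ k ∈ Finset.Icc 2 n, (n.choose k : ℝ) * (-1 : ℝ) ^ k *
          ∑' j : ℕ, (∫ x in (0 : ℝ)..1, x ^ (j + 1) * f x) ^ k) -
        c * n * Real.log n)
      (fun n : ℕ => (n : ℝ)) :=
  moment_zeta_alternating_sum_with_error_general f hcont hnn hprob c δ hδ hasymp
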